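/- arXiv:math/0410427 — 2 statements merged into one kernel-verified Lean document; each statement's English description precedes it below -/
import Mathlib

section
/- Let X be a real normed space, let N : X × X → ℝ be a normalized negative definite kernel, and let φ₁, φ₂ : [0,∞) → [0,∞) be functions such that φ₁(‖x−y‖) ≤ N(x,y) ≤ φ₂(‖x−y‖) for all x, y ∈ X. Let μ be an invariant mean on the additive group of X. Define g : X → ℝ by g(x) = μ(y ↦ N(y+x, y)) (this is well defined since y ↦ N(y+x,y) is bounded for each x). Then: (i) g is a negative definite function on X; (ii) g(0) = 0; (iii) φ₁(‖x‖) ≤ g(x) ≤ φ₂(‖x‖) for all x ∈ X. -/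
/-!
Translating a negative definite kernel `N` by `y` and averaging over `y` with an invariant mean
turns it into a translation-invariant kernel `(a, b) ↦ g (a - b)`: by invariance,
`μ (y ↦ N (y + a) (y + b)) = g (a - b)`. Each quadratic form `∑ cᵢ cⱼ N (y + xᵢ) (y + xⱼ)` is
`≤ 0` pointwise in `y`, so, the mean being linear and positive, `∑ cᵢ cⱼ g (xᵢ - xⱼ) ≤ 0`.
The same positivity carries the pointwise bounds `φ₁ ≤ N ≤ φ₂` over to `g`.
-/

open scoped NNReal

/-- A bounded real-valued function on `X`. -/
def IsBddFun {X : Type*} (h : X → ℝ) : Prop := ∃ M : ℝ, ∀ y, |h y| ≤ M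

/-- An invariant mean on the (discrete) abelian group `X`: a positive, normalized,
translation-invariant linear functional on the space of bounded real-valued functions
on `X`. -/
structure InvariantMean (X : Type*) [AddCommGroup X] where
  toFun : (X → ℝ) → ℝ
  map_add' : ∀ h₁ h₂ : X → ℝ, IsBddFun h₁ → IsBddFun h₂ →
    toFun (h₁ + h₂) = toFun h₁ + toFun h₂
  map_smul' : ∀ (c : ℝ) (h : X → ℝ), IsBddFun h → toFun (c • h) = c * toFun h
  nonneg' : ∀ h : X → ℝ, IsBddFun h → (∀ y, 0 ≤ h y) → 0 ≤ toFun h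
  norm_one' : toFun (fun _ => 1) = 1
  invariant' : ∀ h : X → ℝ, IsBddFun h → ∀ x : X, toFun (fun y => h (y + x)) = toFun h

namespace IsBddFun

variable {X : Type*}

lemma const (c : ℝ) : IsBddFun (fun _ : X => c) := ⟨|c|, fun _ => le_rfl⟩

lemma add {h₁ h₂ : X → ℝ} (H₁ : IsBddFun h₁) (H₂ : IsBddFun h₂) : IsBddFun (h₁ + h₂) := by
  obtain ⟨M₁, hM₁⟩ := H₁
  obtain ⟨M₂, hM₂⟩ := H₂
  exact ⟨M₁ + M₂, fun y => (abs_add_le _ _).trans (add_le_add (hM₁ y) (hM₂ y))⟩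

lemma smul (c : ℝ) {h : X → ℝ} (H : IsBddFun h) : IsBddFun (c • h) := by
  obtain ⟨M, hM⟩ := H
  refine ⟨|c| * M, fun y => ?_⟩
  rw [Pi.smul_apply, smul_eq_mul, abs_mul]
  exact mul_le_mul_of_nonneg_left (hM y) (abs_nonneg c)

lemma sub {h₁ h₂ : X → ℝ} (H₁ : IsBddFun h₁) (H₂ : IsBddFun h₂) : IsBddFun (h₁ - h₂) := by
  simpa [sub_eq_add_neg] using H₁.add (H₂.smul (-1))

lemma sum {ι : Type*} (s : Finset ι) {f : ι → X → ℝ} (H : ∀ i ∈ s, IsBddFun (f i)) :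
    IsBddFun (∑ i ∈ s, f i) := by
  classical
  induction s using Finset.induction_on with
  | empty => rw [Finset.sum_empty]; exact const 0
  | insert a s ha ih =>
    rw [Finset.sum_insert ha]
    exact (H a (s.mem_insert_self a)).add (ih fun i hi => H i (Finset.mem_insert_of_mem hi))

lemma quadForm_eq_sum_smul {ι : Type*} [Fintype ι] (c : ι → ℝ) (f : ι → ι → X → ℝ) :
    (fun y => ∑ i, ∑ j, c i * c j * f i j y) = ∑ i, ∑ j, (c i * c j) • f i j := by
  funext y
  simp only [Finset.sum_apply, Pi.smul_apply, smul_eq_mul]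

lemma quadForm {ι : Type*} [Fintype ι] (c : ι → ℝ) {f : ι → ι → X → ℝ}
    (H : ∀ i j, IsBddFun (f i j)) : IsBddFun fun y => ∑ i, ∑ j, c i * c j * f i j y := by
  rw [quadForm_eq_sum_smul]
  exact sum _ fun i _ => sum _ fun j _ => (H i j).smul _

lemma translate_of_abs_le [AddCommGroup X] {N : X → X → ℝ} {φ : X → ℝ}
    (hφ : ∀ x y, |N x y| ≤ φ (x - y)) (a b : X) : IsBddFun fun y => N (y + a) (y + b) :=
  ⟨φ (a - b), fun y => add_sub_add_left_eq_sub a b y ▸ hφ (y + a) (y + b)⟩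

end IsBddFun

namespace InvariantMean

variable {X : Type*} [AddCommGroup X] (μ : InvariantMean X)

lemma map_const (c : ℝ) : μ.toFun (fun _ => c) = c := by
  have hc : (fun _ : X => c) = c • fun _ => (1 : ℝ) := by
    funext; simp
  rw [hc, μ.map_smul' c _ (IsBddFun.const 1), μ.norm_one', mul_one]

lemma map_sum {ι : Type*} (s : Finset ι) {f : ι → X → ℝ} (H : ∀ i ∈ s, IsBddFun (f i)) :
    μ.toFun (∑ i ∈ s, f i) = ∑ i ∈ s, μ.toFun (f i) := by
  classical
  induction s using Finset.induction_on with
  | empty => rw [Finset.sum_empty, Finset.sum_empty]; exact μ.map_const 0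
  | insert a s ha ih =>
    have hs : ∀ i ∈ s, IsBddFun (f i) := fun i hi => H i (Finset.mem_insert_of_mem hi)
    rw [Finset.sum_insert ha, Finset.sum_insert ha,
      μ.map_add' _ _ (H a (s.mem_insert_self a)) (IsBddFun.sum s hs), ih hs]

lemma mono {h₁ h₂ : X → ℝ} (H₁ : IsBddFun h₁) (H₂ : IsBddFun h₂) (hle : h₁ ≤ h₂) :
    μ.toFun h₁ ≤ μ.toFun h₂ := by
  have hsplit : h₂ = h₁ + (h₂ - h₁) := by abel
  rw [hsplit, μ.map_add' _ _ H₁ (H₂.sub H₁)]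
  exact le_add_of_nonneg_right (μ.nonneg' _ (H₂.sub H₁) fun y => sub_nonneg.2 (hle y))

lemma const_le {h : X → ℝ} (H : IsBddFun h) {c : ℝ} (hle : ∀ y, c ≤ h y) : c ≤ μ.toFun h :=
  μ.map_const c ▸ μ.mono (IsBddFun.const c) H hle

lemma le_const {h : X → ℝ} (H : IsBddFun h) {c : ℝ} (hle : ∀ y, h y ≤ c) : μ.toFun h ≤ c :=
  μ.map_const c ▸ μ.mono H (IsBddFun.const c) hle

lemma map_quadForm {ι : Type*} [Fintype ι] (c : ι → ℝ) {f : ι → ι → X → ℝ}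
    (H : ∀ i j, IsBddFun (f i j)) :
    μ.toFun (fun y => ∑ i, ∑ j, c i * c j * f i j y) = ∑ i, ∑ j, c i * c j * μ.toFun (f i j) := by
  have hterm : ∀ i j, IsBddFun ((c i * c j) • f i j) := fun i j => (H i j).smul _
  rw [IsBddFun.quadForm_eq_sum_smul, μ.map_sum _ fun i _ => IsBddFun.sum _ fun j _ => hterm i j]
  refine Finset.sum_congr rfl fun i _ => ?_
  rw [μ.map_sum _ fun j _ => hterm i j]
  exact Finset.sum_congr rfl fun j _ => μ.map_smul' _ _ (H i j)

def kernelAverage (N : X → X → ℝ) (x : X) : ℝ := μ.toFun (fun y => N (y + x) y)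

variable {μ} {N : X → X → ℝ}

lemma map_translate_eq_kernelAverage (hN : ∀ x, IsBddFun fun y => N (y + x) y) (a b : X) :
    μ.toFun (fun y => N (y + a) (y + b)) = μ.kernelAverage N (a - b) := by
  have hshift : (fun y => N (y + a) (y + b)) = fun y => N (y + b + (a - b)) (y + b) := by
    funext y; rw [add_assoc, add_sub_cancel]
  rw [hshift, μ.invariant' (fun y => N (y + (a - b)) y) (hN _) b]
  rfl

lemma kernelAverage_zero (hdiag : ∀ x, N x x = 0) : μ.kernelAverage N 0 = 0 := by
  simpa [kernelAverage, hdiag] using μ.map_const 0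

lemma kernelAverage_quadForm_nonpos
    (hneg : ∀ (n : ℕ) (x : Fin n → X) (c : Fin n → ℝ), (∑ i, c i) = 0 →
      ∑ i, ∑ j, c i * c j * N (x i) (x j) ≤ 0)
    (hN : ∀ a b, IsBddFun fun y => N (y + a) (y + b))
    {n : ℕ} (x : Fin n → X) (c : Fin n → ℝ) (hc : ∑ i, c i = 0) :
    ∑ i, ∑ j, c i * c j * μ.kernelAverage N (x i - x j) ≤ 0 := by
  have hN' : ∀ a, IsBddFun fun y => N (y + a) y := fun a => by simpa using hN a 0
  simp_rw [← map_translate_eq_kernelAverage hN', ← μ.map_quadForm c fun i j => hN (x i) (x j)]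
  exact μ.le_const (IsBddFun.quadForm c fun i j => hN (x i) (x j))
    fun y => hneg n (fun i => y + x i) c hc

end InvariantMean

theorem invariant_mean_average_of_negative_definite_kernel_general
    (X : Type*) [NormedAddCommGroup X]
    (N : X → X → ℝ)
    (hdiag : ∀ x : X, N x x = 0)
    (hneg : ∀ (n : ℕ) (x : Fin n → X) (c : Fin n → ℝ), (∑ i, c i) = 0 →
      ∑ i, ∑ j, c i * c j * N (x i) (x j) ≤ 0)
    (φ₁ φ₂ : ℝ≥0 → ℝ≥0)
    (hφ : ∀ x y : X, (φ₁ ‖x - y‖₊ : ℝ) ≤ N x y ∧ N x y ≤ (φ₂ ‖x - y‖₊ : ℝ))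
    (μ : InvariantMean X) :
    let g : X → ℝ := fun x => μ.toFun (fun y => N (y + x) y)
    (∀ (n : ℕ) (x : Fin n → X) (c : Fin n → ℝ), (∑ i, c i) = 0 →
      ∑ i, ∑ j, c i * c j * g (x i - x j) ≤ 0) ∧
    g 0 = 0 ∧
    (∀ x : X, (φ₁ ‖x‖₊ : ℝ) ≤ g x ∧ g x ≤ (φ₂ ‖x‖₊ : ℝ)) := by
  have hN : ∀ a b, IsBddFun fun y => N (y + a) (y + b) :=
    IsBddFun.translate_of_abs_le (φ := fun z => φ₂ ‖z‖₊) fun x y =>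
      abs_le.2 ⟨by linarith [(hφ x y).1, (φ₁ ‖x - y‖₊).coe_nonneg], (hφ x y).2⟩
  have hN' : ∀ x, IsBddFun fun y => N (y + x) y := fun x => by simpa using hN x 0
  have hpt : ∀ x y, (φ₁ ‖x‖₊ : ℝ) ≤ N (y + x) y ∧ N (y + x) y ≤ φ₂ ‖x‖₊ := fun x y => by
    simpa using hφ (y + x) y
  refine ⟨fun n x c hc => InvariantMean.kernelAverage_quadForm_nonpos hneg hN x c hc,
    InvariantMean.kernelAverage_zero hdiag, fun x => ⟨?_, ?_⟩⟩
  · exact μ.const_le (hN' x) fun y => (hpt x y).1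
  · exact μ.le_const (hN' x) fun y => (hpt x y).2

/-- **Averaging a negative definite kernel by an invariant mean.**
If `N` is a normalized negative definite kernel on a real normed space `X` with
`φ₁(‖x−y‖) ≤ N x y ≤ φ₂(‖x−y‖)` and `μ` is an invariant mean on `X`, then
`g x = μ (y ↦ N (y+x) y)` is a negative definite function with `g 0 = 0` and
`φ₁(‖x‖) ≤ g x ≤ φ₂(‖x‖)`. -/
theorem invariant_mean_average_of_negative_definite_kernel
    (X : Type*) [NormedAddCommGroup X] [NormedSpace ℝ X]
    (N : X → X → ℝ)
    (hsymm : ∀ x y : X, N x y = N y x)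
    (hdiag : ∀ x : X, N x x = 0)
    (hneg : ∀ (n : ℕ) (x : Fin n → X) (c : Fin n → ℝ), (∑ i, c i) = 0 →
      ∑ i, ∑ j, c i * c j * N (x i) (x j) ≤ 0)
    (φ₁ φ₂ : ℝ≥0 → ℝ≥0)
    (hφ : ∀ x y : X, (φ₁ ‖x - y‖₊ : ℝ) ≤ N x y ∧ N x y ≤ (φ₂ ‖x - y‖₊ : ℝ))
    (μ : InvariantMean X) :
    let g : X → ℝ := fun x => μ.toFun (fun y => N (y + x) y)
    (∀ (n : ℕ) (x : Fin n → X) (c : Fin n → ℝ), (∑ i, c i) = 0 →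
      ∑ i, ∑ j, c i * c j * g (x i - x j) ≤ 0) ∧
    g 0 = 0 ∧
    (∀ x : X, (φ₁ ‖x‖₊ : ℝ) ≤ g x ∧ g x ≤ (φ₂ ‖x‖₊ : ℝ)) :=
  invariant_mean_average_of_negative_definite_kernel_general X N hdiag hneg φ₁ φ₂ hφ μ
end

section
/- Fix 2 < p < ∞ and 0 < α < 1/2. Suppose g : ℓ_p → ℝ is a negative definite function with g(0) = 0, satisfying φ₁(‖x‖) ≤ g(x) ≤ ‖x‖^{2α} for all x ∈ ℓ_p (for some nondecreasing φ₁ : [0,∞) → [0,∞) with φ₁(t) → ∞), and satisfying |g(a)−g(b)| ≤ ‖a−b‖^α(‖a‖^α+‖b‖^α) for all a, b. Then there exists a continuous negative definite function g̃ : ℓ_p → ℝ with g̃(0) = 0 and φ₁(‖x‖) ≤ g̃(x) ≤ ‖x‖^{2α} for all x, which is in addition symmetric: for every sequence of signs θ : ℕ → {−1,+1} and every permutation σ of ℕ, g̃(T_{θ,σ} x) = g̃(x) for all x ∈ ℓ_p. -/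
open scoped NNReal ENNReal
open Filter

/-- For a sequence of signs `θ : ℕ → {−1,+1}` and a permutation `σ` of `ℕ`, the linear
isometry `T_{θ,σ}` of `ℓ_p` given coordinatewise by `(T_{θ,σ} x) n = θ n * x (σ⁻¹ n)`. -/
noncomputable def signPermMap (p : ℝ≥0∞) [Fact (1 ≤ p)] (hp : p ≠ ∞)
    (θ : ℕ → ℝ) (hθ : ∀ n, θ n = 1 ∨ θ n = -1) (σ : Equiv.Perm ℕ)
    (x : lp (fun _ : ℕ => ℝ) p) : lp (fun _ : ℕ => ℝ) p :=
  ⟨fun n => θ n * x (σ.symm n), by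
    have hp0 : 0 < p.toReal := by
      have h1 : (1 : ℝ≥0∞) ≤ p := Fact.out
      exact ENNReal.toReal_pos (by positivity) hp
    apply memℓp_gen
    have hx : Summable fun i => ‖(x : ∀ _ : ℕ, ℝ) i‖ ^ p.toReal :=
      (memℓp_gen_iff hp0).1 (lp.memℓp x)
    have := (Equiv.summable_iff σ.symm (f := fun i => ‖(x : ∀ _ : ℕ, ℝ) i‖ ^ p.toReal)).2 hx
    convert this using 2 with n
    have : |θ n| = 1 := by rcases hθ n with h | h <;> simp [h]
    simp [Real.norm_eq_abs, abs_mul, this, Function.comp]⟩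

/-!
Average `g` over the finite group `H n` of isometries that change signs and permute only the
first `n` coordinates. Each average is still negative definite, vanishes at `0`, satisfies the
same bounds and the same Hölder-type estimate (all of these are preserved by isometries and by
convex combinations), and is `H n`-invariant. A pointwise limit along an ultrafilter finer than
`atTop` keeps these properties, is invariant under every `H n`, and is continuous by the Hölder
estimate. Finally every `T_{θ,σ} x` is a limit of points `S x` with `S` in some `H n`, since a
finitary `S` can be chosen to agree with `T_{θ,σ}` on the first `N` basis vectors.
-/

open Topology Equiv
open scoped BigOperators

def IsNegativeDefinite {X : Type*} [AddGroup X] (g : X → ℝ) : Prop :=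
  ∀ (n : ℕ) (x : Fin n → X) (c : Fin n → ℝ),
    (∑ i, c i) = 0 → ∑ i, ∑ j, c i * c j * g (x i - x j) ≤ 0

namespace IsNegativeDefinite

variable {X Y : Type*} [AddGroup X] [AddGroup Y]

theorem comp {g : Y → ℝ} (hg : IsNegativeDefinite g) {F : Type*} [FunLike F X Y]
    [AddMonoidHomClass F X Y] (f : F) : IsNegativeDefinite (g ∘ f) := fun n x c hc => by
  simpa only [Function.comp_apply, map_sub] using hg n (f ∘ x) c hc

theorem expect {ι : Type*} [Fintype ι] {g : ι → X → ℝ} (hg : ∀ i, IsNegativeDefinite (g i)) :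
    IsNegativeDefinite fun x => 𝔼 i, g i x := fun n x c hc => by
  simp only [Finset.mul_expect, ← Finset.expect_sum_comm]
  exact (Finset.expect_le_expect fun i _ => hg i n x c hc).trans_eq (Finset.expect_const_zero _)

theorem of_tendsto {ι : Type*} {l : Filter ι} [l.NeBot] {G : ι → X → ℝ} {g : X → ℝ}
    (hG : ∀ i, IsNegativeDefinite (G i)) (hlim : ∀ x, Tendsto (G · x) l (𝓝 (g x))) :
    IsNegativeDefinite g := fun n x c hc =>
  le_of_tendsto'
    (tendsto_finsetSum _ fun _ _ => tendsto_finsetSum _ fun _ _ => (hlim _).const_mul _)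
    fun k => hG k n x c hc

end IsNegativeDefinite

def IsWeightedHolder {E : Type*} [SeminormedAddGroup E] (α : ℝ) (g : E → ℝ) : Prop :=
  ∀ a b, |g a - g b| ≤ ‖a - b‖ ^ α * (‖a‖ ^ α + ‖b‖ ^ α)

namespace IsWeightedHolder

variable {E F : Type*} [SeminormedAddCommGroup E] [SeminormedAddCommGroup F] {α : ℝ}

theorem comp {g : E → ℝ} (hg : IsWeightedHolder α g) {R : Type*} [Semiring R] [Module R E]
    [Module R F] (f : F →ₗᵢ[R] E) : IsWeightedHolder α (g ∘ f) := fun a b => by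
  simpa only [Function.comp_apply, ← map_sub, LinearIsometry.norm_map] using hg (f a) (f b)

theorem expect {ι : Type*} [Fintype ι] [Nonempty ι] {g : ι → E → ℝ}
    (hg : ∀ i, IsWeightedHolder α (g i)) : IsWeightedHolder α fun x => 𝔼 i, g i x :=
  fun a b => by
    rw [← Finset.expect_sub_distrib]
    exact (Finset.abs_expect_le _ _).trans
      (Finset.expect_le Finset.univ_nonempty fun i _ => hg i a b)

theorem of_tendsto {ι : Type*} {l : Filter ι} [l.NeBot] {G : ι → E → ℝ} {g : E → ℝ}
    (hG : ∀ i, IsWeightedHolder α (G i)) (hlim : ∀ x, Tendsto (G · x) l (𝓝 (g x))) :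
    IsWeightedHolder α g := fun a b =>
  le_of_tendsto' ((hlim a).sub (hlim b)).abs fun i => hG i a b

theorem continuous {g : E → ℝ} (hg : IsWeightedHolder α g) (hα : 0 < α) : Continuous g := by
  refine continuous_iff_continuousAt.2 fun x₀ => tendsto_iff_norm_sub_tendsto_zero.2 ?_
  have hbound : Continuous fun x => ‖x - x₀‖ ^ α * (‖x‖ ^ α + ‖x₀‖ ^ α) :=
    ((continuous_id.sub continuous_const).norm.rpow_const fun _ => Or.inr hα.le).mul
      ((continuous_norm.rpow_const fun _ => Or.inr hα.le).add continuous_const)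
  refine squeeze_zero (fun _ => norm_nonneg _) (fun x => hg x x₀) ?_
  simpa [Real.zero_rpow hα.ne'] using hbound.tendsto x₀

end IsWeightedHolder

section OrbitMean

variable {E : Type*} [SeminormedAddCommGroup E] [Module ℝ E]
  (H : Subgroup (E ≃ₗᵢ[ℝ] E)) [Fintype H]

noncomputable def orbitMean (g : E → ℝ) (x : E) : ℝ :=
  𝔼 T : H, g ((T : E ≃ₗᵢ[ℝ] E) x)

theorem orbitMean_apply_of_mem (g : E → ℝ) {S : E ≃ₗᵢ[ℝ] E} (hS : S ∈ H) (x : E) :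
    orbitMean H g (S x) = orbitMean H g x :=
  Fintype.expect_equiv (Equiv.mulRight ⟨S, hS⟩) _ _ fun _ => rfl

theorem orbitMean_zero {g : E → ℝ} (hg : g 0 = 0) : orbitMean H g 0 = 0 := by
  simp [orbitMean, hg]

theorem orbitMean_mem_Icc {g lo hi : E → ℝ} (hlo : ∀ T ∈ H, ∀ x, lo (T x) = lo x)
    (hhi : ∀ T ∈ H, ∀ x, hi (T x) = hi x) (hg : ∀ x, g x ∈ Set.Icc (lo x) (hi x)) (x : E) :
    orbitMean H g x ∈ Set.Icc (lo x) (hi x) :=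
  ⟨Finset.le_expect Finset.univ_nonempty fun T _ => hlo T T.2 x ▸ (hg _).1,
    Finset.expect_le Finset.univ_nonempty fun T _ => hhi T T.2 x ▸ (hg _).2⟩

theorem IsNegativeDefinite.orbitMean {g : E → ℝ} (hg : IsNegativeDefinite g) :
    IsNegativeDefinite (orbitMean H g) :=
  IsNegativeDefinite.expect fun T => hg.comp (T : E ≃ₗᵢ[ℝ] E)

theorem IsWeightedHolder.orbitMean {α : ℝ} {g : E → ℝ} (hg : IsWeightedHolder α g) :
    IsWeightedHolder α (orbitMean H g) :=
  IsWeightedHolder.expect fun T => hg.comp (T : E ≃ₗᵢ[ℝ] E).toLinearIsometry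

theorem apply_eq_of_tendsto_orbitMean {H : ℕ → Subgroup (E ≃ₗᵢ[ℝ] E)} [∀ n, Fintype (H n)]
    (hH : Monotone H) {l : Filter ℕ} [l.NeBot] (hl : l ≤ atTop) {g g' : E → ℝ}
    (hlim : ∀ x, Tendsto (fun n => orbitMean (H n) g x) l (𝓝 (g' x)))
    {m : ℕ} {S : E ≃ₗᵢ[ℝ] E} (hS : S ∈ H m) (x : E) : g' (S x) = g' x :=
  tendsto_nhds_unique (hlim (S x)) <| (hlim x).congr' <|
    Eventually.mono (hl (eventually_ge_atTop m)) fun _ hn =>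
      (orbitMean_apply_of_mem _ g (hH hn hS) x).symm

end OrbitMean

theorem exists_tendsto_ultrafilter_of_mem_Icc {ι X : Type*} (U : Ultrafilter ι)
    {F : ι → X → ℝ} {lo hi : X → ℝ} (hF : ∀ i x, F i x ∈ Set.Icc (lo x) (hi x)) :
    ∃ G : X → ℝ, ∀ x, Tendsto (F · x) U (𝓝 (G x)) := by
  choose G _ hG using fun x => isCompact_Icc.ultrafilter_le_nhds (U.map (F · x))
    (le_principal_iff.2 (mem_map.2 (univ_mem' fun i => hF i x)))
  exact ⟨G, hG⟩

theorem finite_pi_bot_of_finite_compl {ι G : Type*} [Group G] [Finite G] {s : Set ι}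
    (hs : sᶜ.Finite) : Finite (Subgroup.pi s fun _ : ι => (⊥ : Subgroup G)) := by
  have := hs.to_subtype
  refine Finite.of_injective (fun ε (i : ↥sᶜ) => ε.1 i) fun ε δ h =>
    Subtype.ext <| funext fun i => ?_
  by_cases hi : i ∈ s
  · rw [Subgroup.mem_bot.1 ((Subgroup.mem_pi _).1 ε.2 i hi),
      Subgroup.mem_bot.1 ((Subgroup.mem_pi _).1 δ.2 i hi)]
  · exact congr_fun h ⟨i, hi⟩

namespace Equiv.Perm

variable {α : Type*} {s : Set α} {π : Perm α}

theorem apply_eq_of_mem_fixingSubgroup (hπ : π ∈ fixingSubgroup (Perm α) s) {a : α}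
    (ha : a ∈ s) : π a = a :=
  (mem_fixingSubgroup_iff _).1 hπ a ha

theorem mapsTo_compl_of_mem_fixingSubgroup (hπ : π ∈ fixingSubgroup (Perm α) s) :
    Set.MapsTo π sᶜ sᶜ := fun _ ha hπa =>
  ha (π.injective (apply_eq_of_mem_fixingSubgroup hπ hπa) ▸ hπa)

theorem exists_mem_fixingSubgroup_Ici_eqOn (σ : Perm ℕ) {N n : ℕ}
    (hn : ∀ k < N, k < n ∧ σ k < n) :
    ∃ π ∈ fixingSubgroup (Perm ℕ) (Set.Ici n), ∀ k < N, π k = σ k := by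
  obtain ⟨τ, hτ⟩ := exists_extending_pair
    (fun k : Fin N => (⟨k, (hn k k.2).1⟩ : {k // k < n})) (fun k => ⟨σ k, (hn k k.2).2⟩)
    (fun a b h => Fin.ext (congrArg Subtype.val h))
    (fun a b h => Fin.ext (σ.injective (congrArg Subtype.val h)))
  refine ⟨ofSubtype τ, (mem_fixingSubgroup_iff _).2 fun k hk =>
    ofSubtype_apply_of_not_mem τ (not_lt.2 hk), fun k hk => ?_⟩
  rw [ofSubtype_apply_of_mem τ (hn k hk).1]
  exact congrArg Subtype.val (hτ ⟨k, hk⟩)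

end Equiv.Perm

theorem finite_fixingSubgroup_of_finite_compl {α : Type*} {s : Set α} (hs : sᶜ.Finite) :
    Finite (fixingSubgroup (Perm α) s) := by
  have := hs.to_subtype
  refine Finite.of_injective
    (fun π (a : ↥sᶜ) => (⟨π.1 a, Perm.mapsTo_compl_of_mem_fixingSubgroup π.2 a.2⟩ : ↥sᶜ))
    fun π τ h => Subtype.ext <| Equiv.ext fun a => ?_
  by_cases ha : a ∈ s
  · rw [Perm.apply_eq_of_mem_fixingSubgroup π.2 ha, Perm.apply_eq_of_mem_fixingSubgroup τ.2 ha]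
  · exact congr_arg Subtype.val (congr_fun h ⟨a, ha⟩)

theorem Int.cast_units_mul_self {R : Type*} [Ring R] (u : ℤˣ) : ((u : ℤ) : R) * (u : ℤ) = 1 := by
  rw [← Int.cast_mul, ← Units.val_mul, Int.units_mul_self, Units.val_one, Int.cast_one]

theorem Int.cast_units_eq_one_or {R : Type*} [Ring R] (u : ℤˣ) :
    ((u : ℤ) : R) = 1 ∨ ((u : ℤ) : R) = -1 := by
  rcases Int.units_eq_one_or u with rfl | rfl <;> simp

section SignedPermutation

variable {p : ℝ≥0∞} [Fact (1 ≤ p)] (hp : p ≠ ∞)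

local notation "ℓp" => lp (fun _ : ℕ => ℝ) p

theorem norm_signPermMap (θ : ℕ → ℝ) (hθ : ∀ n, θ n = 1 ∨ θ n = -1) (σ : Perm ℕ)
    (x : ℓp) : ‖signPermMap p hp θ hθ σ x‖ = ‖x‖ := by
  have hp0 : 0 < p.toReal := ENNReal.toReal_pos (zero_lt_one.trans_le Fact.out).ne' hp
  rw [lp.norm_eq_tsum_rpow hp0, lp.norm_eq_tsum_rpow hp0,
    ← Equiv.tsum_eq σ.symm fun k => ‖x k‖ ^ p.toReal]
  congr 2 with k
  have : |θ k| = 1 := by rcases hθ k with h | h <;> simp [h]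
  simp [signPermMap, this]

/-- `T_{ε,σ}` with the signs taken in `ℤˣ`, so that sign sequences form a group. -/
noncomputable def signPerm (ε : ℕ → ℤˣ) (σ : Perm ℕ) : ℓp ≃ₗᵢ[ℝ] ℓp where
  toFun := signPermMap p hp (fun k => ε k) (fun k => Int.cast_units_eq_one_or (ε k)) σ
  invFun := signPermMap p hp (fun k => ε (σ k)) (fun k => Int.cast_units_eq_one_or (ε (σ k))) σ.symm
  map_add' x y := lp.ext <| funext fun k => mul_add _ _ _
  map_smul' c x := lp.ext <| funext fun k => mul_left_comm _ _ _
  left_inv x := lp.ext <| funext fun k => by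
    simp [signPermMap, ← mul_assoc, Int.cast_units_mul_self]
  right_inv x := lp.ext <| funext fun k => by
    simp [signPermMap, ← mul_assoc, Int.cast_units_mul_self]
  norm_map' := norm_signPermMap hp (fun k => ε k) (fun k => Int.cast_units_eq_one_or (ε k)) σ

theorem signPerm_apply (ε : ℕ → ℤˣ) (σ : Perm ℕ) (x : ℓp) (k : ℕ) :
    signPerm hp ε σ x k = ((ε k : ℤ) : ℝ) * x (σ.symm k) :=
  rfl

theorem exists_signPerm_eq (θ : ℕ → ℝ) (hθ : ∀ n, θ n = 1 ∨ θ n = -1) (σ : Perm ℕ) :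
    ∃ ε, ⇑(signPerm hp ε σ) = signPermMap p hp θ hθ σ := by
  refine ⟨fun k => if θ k = 1 then 1 else -1, funext fun x => lp.ext <| funext fun k => ?_⟩
  rw [signPerm_apply]
  rcases hθ k with h | h <;> simp [signPermMap, h, show (-1 : ℝ) ≠ 1 by norm_num]

theorem signPerm_single (ε : ℕ → ℤˣ) (σ : Perm ℕ) (k : ℕ) (c : ℝ) :
    signPerm hp ε σ (lp.single p k c) = lp.single p (σ k) (((ε (σ k) : ℤ) : ℝ) * c) := by
  refine lp.ext <| funext fun j => ?_
  rw [signPerm_apply, lp.single_apply, lp.single_apply]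
  rcases eq_or_ne j (σ k) with rfl | hj
  · simp
  · have : σ.symm j ≠ k := fun h => hj (by rw [← h, Equiv.apply_symm_apply])
    simp [hj, this]

noncomputable def signChangeHom : (ℕ → ℤˣ) →* (ℓp ≃ₗᵢ[ℝ] ℓp) where
  toFun ε := signPerm hp ε 1
  map_one' := LinearIsometryEquiv.ext fun x => lp.ext <| funext fun k => by
    simp [signPerm_apply, pull_end]
  map_mul' ε δ := LinearIsometryEquiv.ext fun x => lp.ext <| funext fun k => by
    simp [signPerm_apply, pull_end, mul_assoc]

noncomputable def coordPermHom : Perm ℕ →* (ℓp ≃ₗᵢ[ℝ] ℓp) where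
  toFun σ := signPerm hp 1 σ
  map_one' := LinearIsometryEquiv.ext fun x => lp.ext <| funext fun k => by
    simp [signPerm_apply, pull_end]
  map_mul' σ τ := LinearIsometryEquiv.ext fun x => lp.ext <| funext fun k => by
    simp [signPerm_apply, Equiv.Perm.mul_def]

theorem signPerm_eq_mul (ε : ℕ → ℤˣ) (σ : Perm ℕ) :
    signPerm hp ε σ = signChangeHom hp ε * coordPermHom hp σ :=
  LinearIsometryEquiv.ext fun x => lp.ext <| funext fun k => by
    simp [signChangeHom, coordPermHom, signPerm_apply, pull_end]

theorem coordPermHom_mul_signChangeHom (σ : Perm ℕ) (ε : ℕ → ℤˣ) :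
    coordPermHom hp σ * signChangeHom hp ε =
      signChangeHom hp (fun k => ε (σ.symm k)) * coordPermHom hp σ :=
  LinearIsometryEquiv.ext fun x => lp.ext <| funext fun k => by
    simp [signChangeHom, coordPermHom, signPerm_apply, pull_end]

noncomputable def finitarySignPerms (n : ℕ) : Subgroup (ℓp ≃ₗᵢ[ℝ] ℓp) :=
  (fixingSubgroup (Perm ℕ) (Set.Ici n)).map (coordPermHom hp) ⊔
    (Subgroup.pi (Set.Ici n) fun _ => ⊥).map (signChangeHom hp)

theorem finitarySignPerms_mono : Monotone (finitarySignPerms hp) := fun _ _ hmn =>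
  sup_le_sup (Subgroup.map_mono (fixingSubgroup_antitone _ _ (Set.Ici_subset_Ici.2 hmn)))
    (Subgroup.map_mono fun _ hε => (Subgroup.mem_pi _).2 fun k hk =>
      (Subgroup.mem_pi _).1 hε k (Set.Ici_subset_Ici.2 hmn hk))

-- Permutations normalize sign changes, so the join is the product of two finite sets.
instance (n : ℕ) : Finite (finitarySignPerms hp n) := by
  have hfin : (Set.Ici n)ᶜ.Finite := by simp
  have := finite_fixingSubgroup_of_finite_compl hfin
  have := finite_pi_bot_of_finite_compl (G := ℤˣ) hfin
  have hnorm : (fixingSubgroup (Perm ℕ) (Set.Ici n)).map (coordPermHom hp) ≤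
      Subgroup.normalizer
        ((Subgroup.pi (Set.Ici n) fun _ => ⊥).map (signChangeHom hp) : Set _) := by
    rw [Subgroup.le_normalizer_iff]
    rintro _ ⟨π, hπ, rfl⟩ _ ⟨ε, hε, rfl⟩
    rw [coordPermHom_mul_signChangeHom, mul_inv_cancel_right]
    refine Subgroup.mem_map_of_mem _ ((Subgroup.mem_pi _).2 fun k hk => ?_)
    rw [← Perm.inv_def, Perm.apply_eq_of_mem_fixingSubgroup (inv_mem hπ) hk]
    exact (Subgroup.mem_pi _).1 hε k hk
  apply Set.Finite.to_subtype
  rw [finitarySignPerms, Subgroup.coe_mul_of_left_le_normalizer_right _ _ hnorm,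
    Subgroup.coe_map, Subgroup.coe_map]
  exact ((Set.toFinite _).image _).mul ((Set.toFinite _).image _)

theorem signPerm_mem_finitarySignPerms {n : ℕ} {ε : ℕ → ℤˣ} {σ : Perm ℕ}
    (hε : ε ∈ Subgroup.pi (Set.Ici n) fun _ => ⊥) (hσ : σ ∈ fixingSubgroup (Perm ℕ) (Set.Ici n)) :
    signPerm hp ε σ ∈ finitarySignPerms hp n := by
  rw [signPerm_eq_mul]
  exact mul_mem (Subgroup.mem_sup_right (Subgroup.mem_map_of_mem _ hε))
    (Subgroup.mem_sup_left (Subgroup.mem_map_of_mem _ hσ))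

theorem exists_finitarySignPerms_eqOn_single (ε : ℕ → ℤˣ) (σ : Perm ℕ) (N : ℕ) :
    ∃ n, ∃ S ∈ finitarySignPerms hp n,
      ∀ k < N, ∀ c : ℝ, S (lp.single p k c) = signPerm hp ε σ (lp.single p k c) := by
  obtain ⟨n, hn⟩ : ∃ n, ∀ k < N, k < n ∧ σ k < n :=
    ⟨N + (Finset.range N).sup σ + 1, fun k hk =>
      ⟨by omega, by have := Finset.le_sup (f := σ) (Finset.mem_range.2 hk); omega⟩⟩
  obtain ⟨π, hπ, hπσ⟩ := σ.exists_mem_fixingSubgroup_Ici_eqOn hn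
  refine ⟨n, signPerm hp (fun k => if k < n then ε k else 1) π,
    signPerm_mem_finitarySignPerms hp ((Subgroup.mem_pi _).2 fun k hk => ?_) hπ,
    fun k hk c => ?_⟩
  · simp [not_lt.2 (Set.mem_Ici.1 hk)]
  · simp [signPerm_single, hπσ k hk, (hn k hk).2]

theorem signPerm_apply_mem_closure (ε : ℕ → ℤˣ) (σ : Perm ℕ) (x : ℓp) :
    signPerm hp ε σ x ∈ closure {y | ∃ n, ∃ S ∈ finitarySignPerms hp n, S x = y} := by
  set T := signPerm hp ε σ
  set y : ℕ → ℓp := fun N => ∑ k ∈ Finset.range N, lp.single p k (x k)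
  choose n S hS hST using exists_finitarySignPerms_eqOn_single hp ε σ
  have hagree : ∀ N, S N (y N) = T (y N) := fun N => by
    simp only [y, map_sum]
    exact Finset.sum_congr rfl fun k hk => hST N k (Finset.mem_range.1 hk) _
  have hdist : ∀ N, dist (S N x) (T x) ≤ 2 * dist (y N) x := fun N =>
    calc dist (S N x) (T x) ≤ dist (S N x) (S N (y N)) + dist (T (y N)) (T x) :=
          hagree N ▸ dist_triangle _ _ _
      _ = 2 * dist (y N) x := by simp only [LinearIsometryEquiv.dist_map, dist_comm x]; ring
  have hy : Tendsto (fun N => dist (y N) x) atTop (𝓝 0) :=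
    tendsto_iff_dist_tendsto_zero.1 (lp.hasSum_single hp x).tendsto_sum_nat
  refine mem_closure_of_tendsto (f := fun N => S N x) (b := atTop) ?_
    (Eventually.of_forall fun N => ⟨n N, S N, hS N, rfl⟩)
  refine tendsto_iff_dist_tendsto_zero.2 (squeeze_zero (fun _ => dist_nonneg) hdist ?_)
  simpa using hy.const_mul 2

theorem apply_signPerm_eq_of_forall_finitarySignPerms {Y : Type*} [TopologicalSpace Y]
    [T2Space Y] {f : ℓp → Y} (hf : Continuous f)
    (hinv : ∀ n, ∀ S ∈ finitarySignPerms hp n, ∀ x, f (S x) = f x)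
    (ε : ℕ → ℤˣ) (σ : Perm ℕ) (x : ℓp) : f (signPerm hp ε σ x) = f x :=
  closure_minimal (by rintro _ ⟨n, S, hS, rfl⟩; exact hinv n S hS x)
    (isClosed_eq hf continuous_const) (signPerm_apply_mem_closure hp ε σ x)

end SignedPermutation

theorem exists_symmetric_negative_definite_general
    (p : ℝ) [Fact (1 ≤ ENNReal.ofReal p)]
    (hp' : ENNReal.ofReal p ≠ ∞)
    (α : ℝ) (hα₀ : 0 < α)
    (g : lp (fun _ : ℕ => ℝ) (ENNReal.ofReal p) → ℝ)
    (hneg : ∀ (n : ℕ) (x : Fin n → lp (fun _ : ℕ => ℝ) (ENNReal.ofReal p)) (c : Fin n → ℝ),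
      (∑ i, c i) = 0 → ∑ i, ∑ j, c i * c j * g (x i - x j) ≤ 0)
    (hg0 : g 0 = 0)
    (φ₁ : ℝ≥0 → ℝ≥0)
    (hbd : ∀ x, (φ₁ ‖x‖₊ : ℝ) ≤ g x ∧ g x ≤ ‖x‖ ^ (2 * α))
    (hHol : ∀ a b, |g a - g b| ≤ ‖a - b‖ ^ α * (‖a‖ ^ α + ‖b‖ ^ α)) :
    ∃ gt : lp (fun _ : ℕ => ℝ) (ENNReal.ofReal p) → ℝ,
      Continuous gt ∧
      (∀ (n : ℕ) (x : Fin n → lp (fun _ : ℕ => ℝ) (ENNReal.ofReal p)) (c : Fin n → ℝ),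
        (∑ i, c i) = 0 → ∑ i, ∑ j, c i * c j * gt (x i - x j) ≤ 0) ∧
      gt 0 = 0 ∧
      (∀ x, (φ₁ ‖x‖₊ : ℝ) ≤ gt x ∧ gt x ≤ ‖x‖ ^ (2 * α)) ∧
      (∀ (θ : ℕ → ℝ) (hθ : ∀ n, θ n = 1 ∨ θ n = -1) (σ : Equiv.Perm ℕ) (x),
        gt (signPermMap (ENNReal.ofReal p) hp' θ hθ σ x) = gt x) := by
  set H := finitarySignPerms hp'
  have : ∀ n, Fintype (H n) := fun n => Fintype.ofFinite _
  have hbounds (n : ℕ) := orbitMean_mem_Icc (H n) (lo := fun x => (φ₁ ‖x‖₊ : ℝ))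
    (hi := fun x => ‖x‖ ^ (2 * α)) (by simp) (by simp) hbd
  obtain ⟨gt, hgt⟩ := exists_tendsto_ultrafilter_of_mem_Icc (Ultrafilter.of atTop) hbounds
  have hcont : Continuous gt :=
    (IsWeightedHolder.of_tendsto (fun n => IsWeightedHolder.orbitMean (H n) hHol) hgt).continuous
      hα₀
  have hinv (n : ℕ) (S) (hS : S ∈ H n) (x) : gt (S x) = gt x :=
    apply_eq_of_tendsto_orbitMean (finitarySignPerms_mono hp') (Ultrafilter.of_le _) hgt hS x
  refine ⟨gt, hcont,
    IsNegativeDefinite.of_tendsto (fun n => IsNegativeDefinite.orbitMean (H n) hneg) hgt,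
    tendsto_nhds_unique ((hgt 0).congr fun n => orbitMean_zero _ hg0) tendsto_const_nhds,
    fun x => isClosed_Icc.mem_of_tendsto (hgt x) (Eventually.of_forall (hbounds · x)),
    fun θ hθ σ x => ?_⟩
  obtain ⟨ε, hε⟩ := exists_signPerm_eq hp' θ hθ σ
  rw [← hε]
  exact apply_signPerm_eq_of_forall_finitarySignPerms hp' hcont hinv ε σ x

/-- **Symmetrization of the negative definite function on ℓ_p.**
Fix `2 < p < ∞` and `0 < α < 1/2`. If `g : ℓ_p → ℝ` is a negative definite function with
`g 0 = 0`, `φ₁(‖x‖) ≤ g x ≤ ‖x‖^(2α)` (with `φ₁` nondecreasing, `φ₁(t) → ∞`), and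
`|g a − g b| ≤ ‖a−b‖^α (‖a‖^α + ‖b‖^α)`, then there is a continuous negative definite
`g̃ : ℓ_p → ℝ` with `g̃ 0 = 0`, `φ₁(‖x‖) ≤ g̃ x ≤ ‖x‖^(2α)`, which is moreover symmetric:
`g̃ (T_{θ,σ} x) = g̃ x` for all signs `θ`, permutations `σ` and `x ∈ ℓ_p`. -/
theorem exists_symmetric_negative_definite
    (p : ℝ) (hp : 2 < p) [Fact (1 ≤ ENNReal.ofReal p)]
    (hp' : ENNReal.ofReal p ≠ ∞)
    (α : ℝ) (hα₀ : 0 < α) (hα : α < 1 / 2)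
    (g : lp (fun _ : ℕ => ℝ) (ENNReal.ofReal p) → ℝ)
    (hneg : ∀ (n : ℕ) (x : Fin n → lp (fun _ : ℕ => ℝ) (ENNReal.ofReal p)) (c : Fin n → ℝ),
      (∑ i, c i) = 0 → ∑ i, ∑ j, c i * c j * g (x i - x j) ≤ 0)
    (hg0 : g 0 = 0)
    (φ₁ : ℝ≥0 → ℝ≥0) (hφ₁ : Monotone φ₁) (hφ₁top : Tendsto φ₁ atTop atTop)
    (hbd : ∀ x, (φ₁ ‖x‖₊ : ℝ) ≤ g x ∧ g x ≤ ‖x‖ ^ (2 * α))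
    (hHol : ∀ a b, |g a - g b| ≤ ‖a - b‖ ^ α * (‖a‖ ^ α + ‖b‖ ^ α)) :
    ∃ gt : lp (fun _ : ℕ => ℝ) (ENNReal.ofReal p) → ℝ,
      Continuous gt ∧
      (∀ (n : ℕ) (x : Fin n → lp (fun _ : ℕ => ℝ) (ENNReal.ofReal p)) (c : Fin n → ℝ),
        (∑ i, c i) = 0 → ∑ i, ∑ j, c i * c j * gt (x i - x j) ≤ 0) ∧
      gt 0 = 0 ∧
      (∀ x, (φ₁ ‖x‖₊ : ℝ) ≤ gt x ∧ gt x ≤ ‖x‖ ^ (2 * α)) ∧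
      (∀ (θ : ℕ → ℝ) (hθ : ∀ n, θ n = 1 ∨ θ n = -1) (σ : Equiv.Perm ℕ) (x),
        gt (signPermMap (ENNReal.ofReal p) hp' θ hθ σ x) = gt x) :=
  exists_symmetric_negative_definite_general p hp' α hα₀ g hneg hg0 φ₁ hbd hHol
end
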